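/- For every inner function u and all φ, ψ ∈ C(𝕋), the semicommutator A_φ^u A_ψ^u − A_{φψ}^u is a compact operator on K_u; in particular, the commutator [A_φ^u, A_ψ^u] = A_φ^u A_ψ^u − A_ψ^u A_φ^u is compact. -/

import Mathlib

noncomputable section

open MeasureTheory Complex Filter Topology Set ContinuousLinearMap
open scoped ENNReal NNReal ComplexConjugate

set_option maxHeartbeats 1000000
set_option synthInstance.maxHeartbeats 1000000

namespace TTOPaper

instance fact2pi : Fact (0 < 2 * Real.pi) := ⟨by positivity⟩

/-- The circle, modelled additively as `ℝ / 2πℤ`. -/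
abbrev T2π : Type := AddCircle (2 * Real.pi)

/-- Normalized arc-length (Haar) measure on the circle. -/
abbrev μ : Measure T2π := AddCircle.haarAddCircle

/-- `L²(𝕋)`. -/
abbrev Ltwo := Lp ℂ 2 μ

/-- The identity function `z ↦ z` on the circle, i.e. `θ ↦ e^{iθ}`. -/
def zfun : T2π → ℂ := fun θ => (AddCircle.toCircle θ : ℂ)

lemma continuous_zfun : Continuous zfun :=
  continuous_subtype_val.comp AddCircle.continuous_toCircle

/-- A continuous function on the (compact) circle is essentially bounded. -/
lemma memLinfty_of_continuous {f : T2π → ℂ} (hf : Continuous f) : MemLp f ⊤ μ :=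
  hf.memLp_top_of_hasCompactSupport
    (IsCompact.of_isClosed_subset isCompact_univ (isClosed_tsupport f) (Set.subset_univ _)) μ

lemma memLinfty_contMap (φ : C(T2π, ℂ)) : MemLp (⇑φ) ⊤ μ :=
  memLinfty_of_continuous φ.continuous

lemma memLinfty_zfun : MemLp zfun ⊤ μ := memLinfty_of_continuous continuous_zfun

/-- Pointwise product of two essentially bounded functions is essentially bounded. -/
lemma memLinfty_mul {φ ψ : T2π → ℂ} (hφ : MemLp φ ⊤ μ) (hψ : MemLp ψ ⊤ μ) :
    MemLp (fun θ => φ θ * ψ θ) ⊤ μ := by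
  have h : MemLp (φ • ψ) ⊤ μ := MemLp.smul hψ hφ
  exact h.congr_norm (hφ.1.mul hψ.1) (Filter.Eventually.of_forall fun θ => by
    simp [Pi.smul_apply', smul_eq_mul])

/-- Complex conjugate of an essentially bounded function is essentially bounded. -/
lemma memLinfty_conj {f : T2π → ℂ} (hf : MemLp f ⊤ μ) :
    MemLp (fun θ => (starRingEnd ℂ) (f θ)) ⊤ μ :=
  hf.congr_norm (Complex.continuous_conj.comp_aestronglyMeasurable hf.1)
    (Filter.Eventually.of_forall fun θ => by simp)

/-- Multiplication operator `M_φ : L² → L²` by an essentially bounded symbol `φ`. -/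
def mulCLM (φ : T2π → ℂ) (hφ : MemLp φ ⊤ μ) : Ltwo →L[ℂ] Ltwo :=
  LinearMap.mkContinuous
    { toFun := fun f => MemLp.toLp (φ • (⇑f : T2π → ℂ)) ((Lp.memLp f).smul hφ)
      map_add' := fun f g => by
        have h1 : (φ • (⇑(f + g) : T2π → ℂ)) =ᵐ[μ]
            (φ • (⇑f : T2π → ℂ)) + (φ • (⇑g : T2π → ℂ)) := by
          filter_upwards [Lp.coeFn_add f g] with x hx
          simp only [Pi.smul_apply', Pi.add_apply, hx, smul_add]
        exact (MemLp.toLp_congr _ (((Lp.memLp f).smul hφ).add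
          ((Lp.memLp g).smul hφ)) h1).trans (MemLp.toLp_add _ _)
      map_smul' := fun c f => by
        have h1 : (φ • (⇑(c • f) : T2π → ℂ)) =ᵐ[μ] c • (φ • (⇑f : T2π → ℂ)) := by
          filter_upwards [Lp.coeFn_smul c f] with x hx
          simp only [Pi.smul_apply', hx, Pi.smul_apply, smul_comm c]
        show MemLp.toLp (φ • (⇑(c • f) : T2π → ℂ)) ((Lp.memLp (c • f)).smul hφ)
            = c • MemLp.toLp (φ • (⇑f : T2π → ℂ)) ((Lp.memLp f).smul hφ)
        rw [MemLp.toLp_congr ((Lp.memLp (c • f)).smul hφ)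
          (((Lp.memLp f).smul hφ).const_smul c) h1, MemLp.toLp_const_smul] }
    (eLpNorm φ ⊤ μ).toReal
    (fun f => by
      simp only [LinearMap.coe_mk, AddHom.coe_mk]
      rw [Lp.norm_toLp, Lp.norm_def, ← ENNReal.toReal_mul]
      exact ENNReal.toReal_mono (ENNReal.mul_ne_top hφ.eLpNorm_ne_top (Lp.eLpNorm_ne_top f))
        (eLpNorm_smul_le_eLpNorm_top_mul_eLpNorm 2 (Lp.aestronglyMeasurable f) φ))

/-- The Hardy space `H²`, as the subspace of `L²` of functions whose Fourier coefficients of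
negative index all vanish. -/
def H2 : Submodule ℂ Ltwo where
  carrier := {f : Ltwo | ∀ n : ℤ, n < 0 → fourierCoeff (⇑f) n = 0}
  add_mem' := by
    intro f g hf hg n hn
    have hf' := hf n hn
    have hg' := hg n hn
    rw [← fourierBasis_repr] at hf' hg' ⊢
    rw [map_add, lp.coeFn_add, Pi.add_apply, hf', hg', add_zero]
  zero_mem' := by
    intro n hn
    rw [← fourierBasis_repr, map_zero]
    simp
  smul_mem' := by
    intro c f hf n hn
    have hf' := hf n hn
    rw [← fourierBasis_repr] at hf' ⊢
    rw [_root_.map_smul, lp.coeFn_smul, Pi.smul_apply, hf', smul_zero]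

lemma isClosed_H2 : IsClosed (H2 : Set Ltwo) := by
  have h : (H2 : Set Ltwo) =
      ⋂ (n : ℤ) (_ : n < 0), {f : Ltwo | (fourierBasis.repr f : ℤ → ℂ) n = 0} := by
    ext f
    simp only [Set.mem_iInter, Set.mem_setOf_eq]
    constructor
    · intro hf n hn; rw [fourierBasis_repr]; exact hf n hn
    · intro hf n hn; rw [← fourierBasis_repr]; exact hf n hn
  rw [h]
  refine isClosed_iInter fun n => isClosed_iInter fun _ => ?_
  have h1 : Continuous fun x : lp (fun _ : ℤ => ℂ) 2 => (x : ℤ → ℂ) n :=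
    (continuous_apply n).comp lp.uniformContinuous_coe.continuous
  exact isClosed_eq (h1.comp fourierBasis.repr.continuous) continuous_const
/-- An inner function: a nonconstant bounded function in `H²` which is unimodular a.e. -/
structure IsInner (u : T2π → ℂ) : Prop where
  meas : AEStronglyMeasurable u μ
  unimodular : ∀ᵐ θ ∂μ, ‖u θ‖ = 1
  negCoeff : ∀ n : ℤ, n < 0 → fourierCoeff u n = 0
  nonconst : ¬ ∃ c : ℂ, u =ᵐ[μ] fun _ => c

lemma IsInner.memLinfty {u : T2π → ℂ} (hu : IsInner u) : MemLp u ⊤ μ :=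
  memLp_top_of_bound hu.meas 1 (hu.unimodular.mono fun θ h => by
    rw [h])

/-- The holomorphic extension of a function on the circle to the open unit disk, via the
power series whose coefficients are the Fourier coefficients of nonnegative index. -/
def extD (u : T2π → ℂ) (z : ℂ) : ℂ := ∑' n : ℕ, fourierCoeff u (n : ℤ) * z ^ n

/-- The spectrum `σ(u)` of an inner function `u`: the set of `λ` in the closed unit disk where
`liminf_{z → λ, z ∈ 𝔻} |u(z)| = 0`. -/
def specU (u : T2π → ℂ) : Set ℂ :=
  {l | l ∈ Metric.closedBall (0 : ℂ) 1 ∧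
    Filter.liminf (fun z => ‖extD u z‖) (nhdsWithin l (Metric.ball (0 : ℂ) 1)) = 0}

/-- `σ(u) ∩ 𝕋`, viewed as a subset of the additive circle. -/
def specT (u : T2π → ℂ) : Set T2π := {θ : T2π | zfun θ ∈ specU u}

/-- The model space `K_u = H² ⊖ uH²`. -/
def KuSub (u : T2π → ℂ) (hu : IsInner u) : Submodule ℂ Ltwo :=
  H2 ⊓ (Submodule.map (mulCLM u hu.memLinfty).toLinearMap H2)ᗮ

lemma isClosed_KuSub (u : T2π → ℂ) (hu : IsInner u) : IsClosed ((KuSub u hu : Set Ltwo)) := by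
  have h : (KuSub u hu : Set Ltwo) = (H2 : Set Ltwo) ∩
      ((Submodule.map (mulCLM u hu.memLinfty).toLinearMap H2)ᗮ : Set Ltwo) := rfl
  rw [h]
  exact isClosed_H2.inter (Submodule.isClosed_orthogonal _)

instance (u : T2π → ℂ) (hu : IsInner u) : CompleteSpace (KuSub u hu) :=
  (isClosed_KuSub u hu).completeSpace_coe

attribute [irreducible] H2 KuSub mulCLM

instance KuNormedAddCommGroup (u : T2π → ℂ) (hu : IsInner u) :
    NormedAddCommGroup (KuSub u hu) := Submodule.normedAddCommGroup _

instance KuInnerProductSpace (u : T2π → ℂ) (hu : IsInner u) :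
    InnerProductSpace ℂ (KuSub u hu) := Submodule.innerProductSpace _

instance KuNormedSpace (u : T2π → ℂ) (hu : IsInner u) :
    NormedSpace ℂ (KuSub u hu) := by infer_instance

instance KuContinuousStar (u : T2π → ℂ) (hu : IsInner u) :
    ContinuousStar (KuSub u hu →L[ℂ] KuSub u hu) :=
  ⟨(ContinuousLinearMap.adjoint (𝕜 := ℂ) (E := KuSub u hu) (F := KuSub u hu)).continuous⟩

/-- The truncated Toeplitz operator `A_φ^u = P_u M_φ |_{K_u}` on the model space `K_u`. -/
def TTOp (u : T2π → ℂ) (hu : IsInner u) (φ : T2π → ℂ) (hφ : MemLp φ ⊤ μ) :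
    KuSub u hu →L[ℂ] KuSub u hu :=
  ((KuSub u hu).orthogonalProjectionOnto) ∘L (mulCLM φ hφ) ∘L (KuSub u hu).subtypeL

/-- The compressed shift `A_z^u`. -/
def Az (u : T2π → ℂ) (hu : IsInner u) : KuSub u hu →L[ℂ] KuSub u hu :=
  TTOp u hu zfun memLinfty_zfun

/-- The unital C*-algebra generated by the compressed shift. -/
def CstarAz (u : T2π → ℂ) (hu : IsInner u) :
    StarSubalgebra ℂ (KuSub u hu →L[ℂ] KuSub u hu) :=
  StarAlgebra.elemental ℂ (Az u hu)

/-- The commutator ideal of a C*-algebra of operators, i.e. the smallest closed two-sided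
ideal containing all commutators: the closure of the two-sided ideal generated by the
commutators.  Realized here as a subset of the ambient algebra of bounded operators. -/
def commutatorIdealSet {u : T2π → ℂ} {hu : IsInner u}
    (S : StarSubalgebra ℂ (KuSub u hu →L[ℂ] KuSub u hu)) :
    Set (KuSub u hu →L[ℂ] KuSub u hu) :=
  Subtype.val '' (closure
    ((TwoSidedIdeal.span {x : S | ∃ a b : S, x = a * b - b * a} : TwoSidedIdeal S) : Set S))

/-- The essential spectrum of an operator on `K_u`: the spectrum of its image in the Calkin
algebra, i.e. the set of `z` such that `z - T` is not invertible modulo the compacts. -/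
def essSpectrum {u : T2π → ℂ} {hu : IsInner u} (T : KuSub u hu →L[ℂ] KuSub u hu) : Set ℂ :=
  {z : ℂ | ¬ ∃ S : KuSub u hu →L[ℂ] KuSub u hu,
    IsCompactOperator (⇑(S * (z • (1 : KuSub u hu →L[ℂ] KuSub u hu) - T) - 1)) ∧
    IsCompactOperator (⇑((z • (1 : KuSub u hu →L[ℂ] KuSub u hu) - T) * S - 1))}

/-- The essential norm of an operator on `K_u`: the norm of its image in the Calkin algebra,
i.e. the distance to the ideal of compact operators. -/
def essNorm {u : T2π → ℂ} {hu : IsInner u} (T : KuSub u hu →L[ℂ] KuSub u hu) : ℝ :=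
  sInf {c : ℝ | ∃ K : KuSub u hu →L[ℂ] KuSub u hu, IsCompactOperator (⇑K) ∧ c = ‖T - K‖}


/-! ### Piecewise continuous symbols -/

/-- `φ` has one-sided limits `Lp` (from above) and `Lm` (from below) at the point `ζ` of the
circle, computed in terms of any lift of `ζ` to `ℝ`. -/
def HasOneSidedLimits (φ : T2π → ℂ) (ζ : T2π) (Lp Lm : ℂ) : Prop :=
  ∀ x : ℝ, (x : T2π) = ζ →
    Filter.Tendsto (fun t : ℝ => φ (t : T2π)) (nhdsWithin x (Set.Ioi x)) (nhds Lp) ∧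
    Filter.Tendsto (fun t : ℝ => φ (t : T2π)) (nhdsWithin x (Set.Iio x)) (nhds Lm)

/-- A piecewise continuous function on the circle: continuous off a finite set, with one-sided
limits at each of the exceptional points. -/
def PiecewiseContinuous (φ : T2π → ℂ) : Prop :=
  ∃ F : Finset T2π, ContinuousOn φ ((↑F : Set T2π)ᶜ) ∧
    ∀ ζ ∈ F, ∃ Lp Lm : ℂ, HasOneSidedLimits φ ζ Lp Lm

/-- The function `χ(e^{iθ}) = 1 - θ/(2π)`, `0 ≤ θ < 2π`. -/
def chiFun : T2π → ℂ :=
  fun ζ => 1 - ((((AddCircle.measurableEquivIco (T := 2 * Real.pi) 0 ζ : ℝ) / (2 * Real.pi)) : ℝ) : ℂ)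

lemma memLinfty_chiFun : MemLp chiFun ⊤ μ := by
  have hmeas : Measurable chiFun := by
    have h1 : Measurable fun ζ : T2π => (AddCircle.measurableEquivIco (T := 2 * Real.pi) 0 ζ : ℝ) :=
      measurable_subtype_coe.comp (AddCircle.measurableEquivIco (T := 2 * Real.pi) 0).measurable
    exact (Complex.measurable_ofReal.comp (h1.div_const _)).const_sub 1
  refine memLp_top_of_bound hmeas.aestronglyMeasurable 1 (Filter.Eventually.of_forall fun ζ => ?_)
  set r : ℝ := (AddCircle.measurableEquivIco (T := 2 * Real.pi) 0 ζ : ℝ) with hr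
  have hmem : r ∈ Set.Ico (0 : ℝ) (0 + 2 * Real.pi) :=
    (AddCircle.measurableEquivIco (T := 2 * Real.pi) 0 ζ).2
  have h2π : (0 : ℝ) < 2 * Real.pi := fact2pi.out
  have h0 : 0 ≤ r / (2 * Real.pi) := div_nonneg hmem.1 h2π.le
  have h1' : r / (2 * Real.pi) < 1 := by
    rw [div_lt_one h2π]
    simpa using hmem.2
  have : chiFun ζ = (((1 : ℝ) - r / (2 * Real.pi) : ℝ) : ℂ) := by
    simp [chiFun, hr]
  rw [this, Complex.norm_real, Real.norm_eq_abs, abs_le]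
  constructor <;> nlinarith

/-! ### Ingredients for Clark's unitary perturbations -/

/-- The value `u(0)` of the holomorphic extension of `u` at the origin. -/
def u0 (u : T2π → ℂ) : ℂ := extD u 0

/-- The reproducing kernel `k₀ = 1 - conj(u(0))·u` at the origin, as a function. -/
def k0fun (u : T2π → ℂ) : T2π → ℂ := fun θ => 1 - (starRingEnd ℂ) (u0 u) * u θ

lemma memLinfty_k0fun {u : T2π → ℂ} (hu : IsInner u) : MemLp (k0fun u) ⊤ μ := by
  have hmeas : AEStronglyMeasurable (k0fun u) μ :=
    aestronglyMeasurable_const.sub (hu.meas.const_mul _)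
  refine memLp_top_of_bound hmeas (1 + ‖u0 u‖) ?_
  filter_upwards [hu.unimodular] with θ hθ
  calc ‖1 - (starRingEnd ℂ) (u0 u) * u θ‖
      ≤ ‖(1 : ℂ)‖ + ‖(starRingEnd ℂ) (u0 u) * u θ‖ := norm_sub_le _ _
    _ ≤ 1 + ‖u0 u‖ := by
        rw [norm_mul]
        simp only [norm_one, map_mul]
        rw [Complex.norm_conj, hθ, mul_one]

/-- `Cf(ζ) = u(ζ) ζ̄ conj(f(ζ))`, applied to `k₀`, as a function. -/
def Ck0fun (u : T2π → ℂ) : T2π → ℂ :=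
  fun θ => u θ * (starRingEnd ℂ) (zfun θ) * (starRingEnd ℂ) (k0fun u θ)

lemma memLinfty_Ck0fun {u : T2π → ℂ} (hu : IsInner u) : MemLp (Ck0fun u) ⊤ μ :=
  memLinfty_mul (memLinfty_mul hu.memLinfty (memLinfty_conj memLinfty_zfun))
    (memLinfty_conj (memLinfty_k0fun hu))

/-- `k₀` as an element of the model space (it indeed lies in `K_u`, so that projecting the
corresponding `L²`-function onto `K_u` does not change it). -/
def k0 (u : T2π → ℂ) (hu : IsInner u) : KuSub u hu :=
  (KuSub u hu).orthogonalProjectionOnto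
    (MemLp.toLp (k0fun u) ((memLinfty_k0fun hu).mono_exponent le_top))

/-- `Ck₀` as an element of the model space. -/
def Ck0 (u : T2π → ℂ) (hu : IsInner u) : KuSub u hu :=
  (KuSub u hu).orthogonalProjectionOnto
    (MemLp.toLp (Ck0fun u) ((memLinfty_Ck0fun hu).mono_exponent le_top))

/-- The rank-one operator `k₀ ⊗ Ck₀ : f ↦ ⟨f, Ck₀⟩ k₀` (the inner product being that of `L²`,
conjugate-linear in `Ck₀`). -/
def rankOneClark (u : T2π → ℂ) (hu : IsInner u) : KuSub u hu →L[ℂ] KuSub u hu :=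
  (innerSL ℂ (Ck0 u hu)).smulRight (k0 u hu)

/-- The Clark perturbation `U_α = A_z^u + (α/(1 - conj(u(0))α)) k₀ ⊗ Ck₀`. -/
def clarkU (u : T2π → ℂ) (hu : IsInner u) (α : ℂ) : KuSub u hu →L[ℂ] KuSub u hu :=
  Az u hu + (α / (1 - (starRingEnd ℂ) (u0 u) * α)) • rankOneClark u hu

/-! ### Complex symmetric operators -/

/-- A conjugation: a conjugate-linear isometric involution. -/
structure IsConjugation {E : Type*} [NormedAddCommGroup E] [InnerProductSpace ℂ E]
    (J : E → E) : Prop where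
  map_add : ∀ x y, J (x + y) = J x + J y
  map_smul : ∀ (c : ℂ) (x), J (c • x) = (starRingEnd ℂ) c • J x
  involutive : ∀ x, J (J x) = x
  inner_map : ∀ x y, (inner ℂ (J x) (J y) : ℂ) = (inner ℂ y x : ℂ)

/-- The block operator matrix `[[0, A], [0, 0]]` on `H ⊕ H` (with the `ℓ²` direct sum norm). -/
def blockOp {H : Type*} [NormedAddCommGroup H] [InnerProductSpace ℂ H] (A : H →L[ℂ] H) :
    WithLp 2 (H × H) →L[ℂ] WithLp 2 (H × H) :=
  (((WithLp.prodContinuousLinearEquiv 2 ℂ H H).symm : (H × H) →L[ℂ] WithLp 2 (H × H)) ∘L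
    ((A.comp (ContinuousLinearMap.snd ℂ H H)).prod 0)) ∘L
    ((WithLp.prodContinuousLinearEquiv 2 ℂ H H) : WithLp 2 (H × H) →L[ℂ] (H × H))


/-! ### The unilateral shift and direct sums -/

/-- `ℓ²(ℕ)`. -/
abbrev ellTwo := lp (fun _ : ℕ => ℂ) 2

/-- The underlying function of the unilateral shift: `(x₀, x₁, …) ↦ (0, x₀, x₁, …)`. -/
def shiftFun (x : ℕ → ℂ) : ℕ → ℂ := fun n => if n = 0 then 0 else x (n - 1)

lemma memℓp_shiftFun (x : ellTwo) : Memℓp (shiftFun (⇑x)) 2 := by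
  apply memℓp_gen
  have hs : Summable fun n : ℕ => ‖x n‖ ^ (2 : ℝ≥0∞).toReal :=
    (lp.memℓp x).summable (by norm_num)
  refine (summable_nat_add_iff 1).mp ?_
  have h : (fun n : ℕ => ‖shiftFun (⇑x) (n + 1)‖ ^ (2 : ℝ≥0∞).toReal)
      = fun n : ℕ => ‖x n‖ ^ (2 : ℝ≥0∞).toReal := by
    funext n; simp [shiftFun]
  rw [h]; exact hs

lemma tsum_shiftFun (x : ellTwo) :
    ∑' n : ℕ, ‖(⟨shiftFun (⇑x), memℓp_shiftFun x⟩ : ellTwo) n‖ ^ (2 : ℝ≥0∞).toReal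
      = ∑' n : ℕ, ‖x n‖ ^ (2 : ℝ≥0∞).toReal := by
  show ∑' n : ℕ, ‖shiftFun (⇑x) n‖ ^ (2 : ℝ≥0∞).toReal = _
  rw [Summable.tsum_eq_zero_add ((memℓp_shiftFun x).summable (by norm_num))]
  have h0 : ‖shiftFun (⇑x) 0‖ ^ (2 : ℝ≥0∞).toReal = 0 := by
    simp [shiftFun, Real.zero_rpow (by norm_num : (2 : ℝ≥0∞).toReal ≠ 0)]
  have h : (fun n : ℕ => ‖shiftFun (⇑x) (n + 1)‖ ^ (2 : ℝ≥0∞).toReal)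
      = fun n : ℕ => ‖x n‖ ^ (2 : ℝ≥0∞).toReal := by
    funext n; simp [shiftFun]
  rw [h0, h, zero_add]

/-- The unilateral shift `S` on `ℓ²(ℕ)`. -/
def shiftS : ellTwo →L[ℂ] ellTwo :=
  LinearMap.mkContinuous
    { toFun := fun x => (⟨shiftFun (⇑x), memℓp_shiftFun x⟩ : ellTwo)
      map_add' := fun x y => by
        apply Subtype.ext
        funext n
        have h1 : (x + y : ellTwo) n = x n + y n := by rw [lp.coeFn_add]; rfl
        show shiftFun (⇑(x + y)) n = shiftFun (⇑x) n + shiftFun (⇑y) n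
        by_cases h : n = 0 <;> simp [shiftFun, h, h1]
      map_smul' := fun c x => by
        apply Subtype.ext
        funext n
        have h1 : (c • x : ellTwo) n = c • x n := by rw [lp.coeFn_smul]; rfl
        show shiftFun (⇑(c • x)) n = c • shiftFun (⇑x) n
        by_cases h : n = 0 <;> simp [shiftFun, h, h1] }
    1
    (fun x => by
      have h2 : (0 : ℝ) < (2 : ℝ≥0∞).toReal := by norm_num
      show ‖(⟨shiftFun (⇑x), memℓp_shiftFun x⟩ : ellTwo)‖ ≤ 1 * ‖x‖
      rw [one_mul, lp.norm_eq_tsum_rpow h2, lp.norm_eq_tsum_rpow h2, tsum_shiftFun x])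

/-- The diagonal (componentwise) operator `⊕ᵢ Vᵢ` on an `ℓ²`-direct sum, given a uniform
bound on the `Vᵢ`. -/
def lpDiag {E : ℕ → Type*} [∀ i, NormedAddCommGroup (E i)] [∀ i, NormedSpace ℂ (E i)]
    (V : ∀ i, E i →L[ℂ] E i) (C : ℝ) (hC : 0 ≤ C) (hV : ∀ i (y : E i), ‖V i y‖ ≤ C * ‖y‖) :
    lp E 2 →L[ℂ] lp E 2 :=
  have h2 : (0 : ℝ) < (2 : ℝ≥0∞).toReal := by norm_num
  have key : ∀ x : lp E 2, Summable fun i => ‖V i (x i)‖ ^ (2 : ℝ≥0∞).toReal := by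
    intro x
    refine Summable.of_nonneg_of_le (fun i => Real.rpow_nonneg (norm_nonneg _) _)
      (fun i => ?_) (((lp.memℓp x).summable h2).mul_left (C ^ (2 : ℝ≥0∞).toReal))
    calc ‖V i (x i)‖ ^ (2 : ℝ≥0∞).toReal
        ≤ (C * ‖x i‖) ^ (2 : ℝ≥0∞).toReal :=
          Real.rpow_le_rpow (norm_nonneg _) (hV i (x i)) h2.le
      _ = C ^ (2 : ℝ≥0∞).toReal * ‖x i‖ ^ (2 : ℝ≥0∞).toReal :=
          Real.mul_rpow hC (norm_nonneg _)
  LinearMap.mkContinuous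
    { toFun := fun x => (⟨fun i => V i (x i), memℓp_gen (key x)⟩ : lp E 2)
      map_add' := fun x y => by
        apply Subtype.ext
        funext i
        have h1 : (x + y : lp E 2) i = x i + y i := by rw [lp.coeFn_add]; rfl
        show V i ((x + y : lp E 2) i) = V i (x i) + V i (y i)
        rw [h1, map_add]
      map_smul' := fun c x => by
        apply Subtype.ext
        funext i
        have h1 : (c • x : lp E 2) i = c • x i := by rw [lp.coeFn_smul]; rfl
        show V i ((c • x : lp E 2) i) = c • V i (x i)
        rw [h1, _root_.map_smul] }
    C
    (fun x => by
      show ‖(⟨fun i => V i (x i), memℓp_gen (key x)⟩ : lp E 2)‖ ≤ C * ‖x‖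
      rw [lp.norm_eq_tsum_rpow h2, lp.norm_eq_tsum_rpow h2]
      have hsum := (lp.memℓp x).summable h2
      have hineq : ∑' i, ‖(⟨fun i => V i (x i), memℓp_gen (key x)⟩ : lp E 2) i‖
            ^ (2 : ℝ≥0∞).toReal
          ≤ C ^ (2 : ℝ≥0∞).toReal * ∑' i, ‖x i‖ ^ (2 : ℝ≥0∞).toReal := by
        rw [← tsum_mul_left]
        refine Summable.tsum_le_tsum (fun i => ?_) (key x) (hsum.mul_left _)
        calc ‖V i (x i)‖ ^ (2 : ℝ≥0∞).toReal
            ≤ (C * ‖x i‖) ^ (2 : ℝ≥0∞).toReal :=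
              Real.rpow_le_rpow (norm_nonneg _) (hV i (x i)) h2.le
          _ = C ^ (2 : ℝ≥0∞).toReal * ‖x i‖ ^ (2 : ℝ≥0∞).toReal :=
              Real.mul_rpow hC (norm_nonneg _)
      calc (∑' i, ‖(⟨fun i => V i (x i), memℓp_gen (key x)⟩ : lp E 2) i‖
            ^ (2 : ℝ≥0∞).toReal) ^ (1 / (2 : ℝ≥0∞).toReal)
          ≤ (C ^ (2 : ℝ≥0∞).toReal * ∑' i, ‖x i‖ ^ (2 : ℝ≥0∞).toReal)
              ^ (1 / (2 : ℝ≥0∞).toReal) := by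
            refine Real.rpow_le_rpow ?_ hineq (by positivity)
            exact tsum_nonneg fun i => Real.rpow_nonneg (norm_nonneg _) _
        _ = C * (∑' i, ‖x i‖ ^ (2 : ℝ≥0∞).toReal) ^ (1 / (2 : ℝ≥0∞).toReal) := by
            rw [Real.mul_rpow (Real.rpow_nonneg hC _)
              (tsum_nonneg fun i => Real.rpow_nonneg (norm_nonneg _) _)]
            rw [← Real.rpow_mul hC, mul_one_div_cancel (ne_of_gt h2), Real.rpow_one])


/-- The Hankel-type operator `H_f^u : K_u → L²`, `g ↦ (I - P_u)(f·g)`. -/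
def hankel (u : T2π → ℂ) (hu : IsInner u) (f : T2π → ℂ) (hf : MemLp f ⊤ μ) :
    KuSub u hu →L[ℂ] Ltwo :=
  ((ContinuousLinearMap.id ℂ Ltwo - (KuSub u hu).subtypeL ∘L (KuSub u hu).orthogonalProjectionOnto) ∘L
    mulCLM f hf) ∘L (KuSub u hu).subtypeL

/-- `S ⊕ S*` on `ℓ² ⊕ ℓ²`. -/
def sOplusSstar : WithLp 2 (ellTwo × ellTwo) →L[ℂ] WithLp 2 (ellTwo × ellTwo) :=
  (((WithLp.prodContinuousLinearEquiv 2 ℂ ellTwo ellTwo).symm :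
      (ellTwo × ellTwo) →L[ℂ] WithLp 2 (ellTwo × ellTwo)) ∘L
    (shiftS.prodMap (ContinuousLinearMap.adjoint shiftS))) ∘L
    ((WithLp.prodContinuousLinearEquiv 2 ℂ ellTwo ellTwo) :
      WithLp 2 (ellTwo × ellTwo) →L[ℂ] (ellTwo × ellTwo))

/-- `⊕_{i=1}^∞ (S ⊕ S*)` on the `ℓ²`-direct sum of countably many copies of `ℓ² ⊕ ℓ²`. -/
def bigDirectSum :
    lp (fun _ : ℕ => WithLp 2 (ellTwo × ellTwo)) 2 →L[ℂ]
      lp (fun _ : ℕ => WithLp 2 (ellTwo × ellTwo)) 2 :=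
  lpDiag (fun _ => sOplusSstar) ‖sOplusSstar‖ (norm_nonneg _)
    (fun _ y => ContinuousLinearMap.le_opNorm _ y)

/-!
Write `H_A = (1 - P) A|_{K_u}` for the part of an operator `A` on `L²` that leaves `K_u`. Then
`A_φ A_ψ - A_{φψ} = -P M_φ H_{M_ψ}`, so it suffices that `H_{M_ψ}` is compact for continuous `ψ`.
The identity `H_{AB} = H_A A_B + (1 - P) A H_B` makes the symbols with compact `H` closed under
products. Since `K_u` is invariant under the backward shift, `H_{M_z̄} = ⟨·, 1⟩ z̄` and
`H_{M_z} = ⟨z ·, u⟩ u` have rank one, so every trigonometric polynomial qualifies; as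
`ψ ↦ H_{M_ψ}` is continuous on `C(𝕋)`, density does the rest. The commutator is the difference of
two semicommutators.
-/

open scoped InnerProductSpace

section Compression

variable {𝕜 E : Type*} [RCLike 𝕜] [NormedAddCommGroup E] [InnerProductSpace 𝕜 E]
  (K : Submodule 𝕜 E) [K.HasOrthogonalProjection]

def compression (A : E →L[𝕜] E) : K →L[𝕜] K :=
  K.orthogonalProjectionOnto ∘L A ∘L K.subtypeL

/-- For `K = K_u` and a multiplication operator `A = M_φ` this is the operator `hankel`. -/
def complCompression : (E →L[𝕜] E) →L[𝕜] (K →L[𝕜] E) :=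
  (compL 𝕜 K E E).flip K.subtypeL ∘L compL 𝕜 E E E Kᗮ.starProjection

lemma complCompression_apply (A : E →L[𝕜] E) :
    complCompression K A = Kᗮ.starProjection ∘L A ∘L K.subtypeL := rfl

lemma complCompression_apply_apply (A : E →L[𝕜] E) (x : K) :
    complCompression K A x = Kᗮ.starProjection (A x) := rfl

lemma complCompression_one : complCompression K 1 = 0 := by
  ext x
  simp [complCompression_apply, Submodule.starProjection_orthogonal_apply_eq_zero x.2]

lemma compression_mul_compression_sub_compression_comp (A B : E →L[𝕜] E) :
    compression K A * compression K B - compression K (A ∘L B)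
      = -(K.orthogonalProjectionOnto ∘L A ∘L complCompression K B) := by
  ext x
  simp only [compression, complCompression_apply, mul_apply_eq_comp, sub_apply, neg_apply,
    comp_apply, Submodule.subtypeL_apply]
  rw [Submodule.starProjection_orthogonal_val, map_sub, map_sub, Submodule.starProjection_apply,
    neg_sub]

lemma complCompression_comp (A B : E →L[𝕜] E) :
    complCompression K (A ∘L B)
      = complCompression K A ∘L compression K B
        + Kᗮ.starProjection ∘L A ∘L complCompression K B := by
  ext x
  simp only [compression, complCompression_apply, add_apply, comp_apply, Submodule.subtypeL_apply]
  rw [Submodule.starProjection_orthogonal_val (B x), ← Submodule.starProjection_apply, map_sub,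
    map_sub]
  abel

lemma starProjection_orthogonal_eq_of_sub_mem {x y : E} (hy : y ∈ Kᗮ) (hxy : x - y ∈ K) :
    Kᗮ.starProjection x = y :=
  Submodule.eq_starProjection_of_mem_orthogonal hy (K.le_orthogonal_orthogonal hxy)

variable {K}

lemma isCompactOperator_complCompression_comp {A B : E →L[𝕜] E}
    (hA : IsCompactOperator (complCompression K A))
    (hB : IsCompactOperator (complCompression K B)) :
    IsCompactOperator (complCompression K (A ∘L B)) := by
  rw [complCompression_comp]
  exact (hA.comp_clm _).add (hB.clm_comp (Kᗮ.starProjection ∘L A))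

end Compression

lemma isCompactOperator_smulRight {𝕜 X Y : Type*} [NontriviallyNormedField 𝕜]
    [LocallyCompactSpace 𝕜] [NormedAddCommGroup X] [NormedSpace 𝕜 X] [NormedAddCommGroup Y]
    [NormedSpace 𝕜 Y] (φ : X →L[𝕜] 𝕜) (y : Y) : IsCompactOperator (φ.smulRight y) :=
  (isCompactOperator_of_locallyCompactSpace_dom φ).clm_comp (toSpanSingleton 𝕜 y)

lemma isCompactOperator_mul_sub_mul_of_sub {𝕜 X : Type*} [NontriviallyNormedField 𝕜]
    [NormedAddCommGroup X] [NormedSpace 𝕜 X] {A B C : X →L[𝕜] X}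
    (hAB : IsCompactOperator (A * B - C))
    (hBA : IsCompactOperator (B * A - C)) : IsCompactOperator (A * B - B * A) := by
  have h := hAB.sub hBA
  rwa [← FunLike.coe_sub, sub_sub_sub_cancel_right] at h

/-- Compact operators form a closed subspace, and trigonometric polynomials are dense in
`C(𝕋)`. -/
lemma isCompactOperator_of_forall_fourier {T : ℝ} [Fact (0 < T)] {X Y : Type*}
    [NormedAddCommGroup X] [NormedSpace ℂ X] [NormedAddCommGroup Y] [NormedSpace ℂ Y]
    [CompleteSpace Y] (L : C(AddCircle T, ℂ) →L[ℂ] (X →L[ℂ] Y))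
    (hL : ∀ n, IsCompactOperator (L (fourier n))) (f : C(AddCircle T, ℂ)) :
    IsCompactOperator (L f) := by
  let S := (compactOperator (RingHom.id ℂ) X Y).comap L.toLinearMap
  have hS : IsClosed (S : Set C(AddCircle T, ℂ)) :=
    isClosed_setOfPred_isCompactOperator.preimage L.continuous
  have hspan : Submodule.span ℂ (range fourier) ≤ S :=
    Submodule.span_le.2 (range_subset_iff.2 hL)
  have hclosure := Submodule.topologicalClosure_minimal _ hspan hS
  rw [span_fourier_closure_eq_top] at hclosure
  exact hclosure (Submodule.mem_top (x := f))

section Multiplication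

variable {φ ψ : T2π → ℂ}

lemma mulCLM_coeFn (hφ : MemLp φ ⊤ μ) (f : Ltwo) :
    mulCLM φ hφ f =ᵐ[μ] fun θ => φ θ * f θ := by
  unfold mulCLM
  exact MemLp.coeFn_toLp ((Lp.memLp f).smul hφ)

lemma mulCLM_comp (hφ : MemLp φ ⊤ μ) (hψ : MemLp ψ ⊤ μ) :
    mulCLM φ hφ ∘L mulCLM ψ hψ = mulCLM (fun θ => φ θ * ψ θ) (memLinfty_mul hφ hψ) := by
  ext f
  filter_upwards [mulCLM_coeFn hφ (mulCLM ψ hψ f), mulCLM_coeFn hψ f,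
    mulCLM_coeFn (memLinfty_mul hφ hψ) f] with θ h₁ h₂ h₃
  rw [comp_apply, h₁, h₂, h₃, mul_assoc]

lemma mulCLM_comp_comm (hφ : MemLp φ ⊤ μ) (hψ : MemLp ψ ⊤ μ) :
    mulCLM φ hφ ∘L mulCLM ψ hψ = mulCLM ψ hψ ∘L mulCLM φ hφ := by
  simp only [mulCLM_comp, mul_comm (φ _)]

lemma mulCLM_add (hφ : MemLp φ ⊤ μ) (hψ : MemLp ψ ⊤ μ) :
    mulCLM (φ + ψ) (hφ.add hψ) = mulCLM φ hφ + mulCLM ψ hψ := by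
  ext f
  filter_upwards [mulCLM_coeFn (hφ.add hψ) f, mulCLM_coeFn hφ f, mulCLM_coeFn hψ f,
    Lp.coeFn_add (mulCLM φ hφ f) (mulCLM ψ hψ f)] with θ h₁ h₂ h₃ h₄
  rw [add_apply, h₁, h₄, Pi.add_apply, Pi.add_apply, h₂, h₃, add_mul]

lemma mulCLM_smul (c : ℂ) (hφ : MemLp φ ⊤ μ) :
    mulCLM (c • φ) (hφ.const_smul c) = c • mulCLM φ hφ := by
  ext f
  filter_upwards [mulCLM_coeFn (hφ.const_smul c) f, mulCLM_coeFn hφ f,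
    Lp.coeFn_smul c (mulCLM φ hφ f)] with θ h₁ h₂ h₃
  rw [smul_apply, h₁, h₃, Pi.smul_apply, Pi.smul_apply, h₂, smul_eq_mul, smul_eq_mul, mul_assoc]

lemma norm_mulCLM_le (hφ : MemLp φ ⊤ μ) : ‖mulCLM φ hφ‖ ≤ (eLpNorm φ ⊤ μ).toReal := by
  unfold mulCLM
  exact LinearMap.mkContinuous_norm_le _ ENNReal.toReal_nonneg _

lemma inner_Ltwo (f g : Ltwo) : ⟪f, g⟫_ℂ = ∫ θ, conj (f θ) * g θ ∂μ := by
  simp [L2.inner_def, RCLike.inner_apply, mul_comm]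

lemma inner_mulCLM_mulCLM_of_norm_eq_one (hφ : MemLp φ ⊤ μ) (hφ₁ : ∀ᵐ θ ∂μ, ‖φ θ‖ = 1)
    (f g : Ltwo) : ⟪mulCLM φ hφ f, mulCLM φ hφ g⟫_ℂ = ⟪f, g⟫_ℂ := by
  rw [inner_Ltwo, inner_Ltwo]
  refine integral_congr_ae ?_
  filter_upwards [mulCLM_coeFn hφ f, mulCLM_coeFn hφ g, hφ₁] with θ hf hg h₁
  have hφφ : conj (φ θ) * φ θ = 1 := by
    rw [mul_comm, mul_conj, normSq_eq_norm_sq, h₁, one_pow, ofReal_one]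
  rw [hf, hg, map_mul]
  linear_combination (conj (f θ) * g θ) * hφφ

def mulContCLM : C(T2π, ℂ) →L[ℂ] (Ltwo →L[ℂ] Ltwo) :=
  LinearMap.mkContinuous
    { toFun := fun f => mulCLM f (memLinfty_contMap f)
      map_add' := fun f g => mulCLM_add (memLinfty_contMap f) (memLinfty_contMap g)
      map_smul' := fun c f => mulCLM_smul c (memLinfty_contMap f) }
    1
    (fun f => by
      refine (norm_mulCLM_le _).trans ?_
      rw [one_mul, eLpNorm_exponent_top]
      exact ENNReal.toReal_le_of_le_ofReal (norm_nonneg f)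
        (eLpNormEssSup_le_of_ae_bound (Eventually.of_forall f.norm_coe_le_norm)))

lemma mulContCLM_apply (f : C(T2π, ℂ)) : mulContCLM f = mulCLM f (memLinfty_contMap f) := rfl

lemma mulContCLM_mul (f g : C(T2π, ℂ)) : mulContCLM (f * g) = mulContCLM f ∘L mulContCLM g :=
  (mulCLM_comp _ _).symm

lemma mulContCLM_one : mulContCLM 1 = 1 := by
  ext f
  filter_upwards [mulCLM_coeFn (memLinfty_contMap 1) f] with θ h
  rw [mulContCLM_apply, h, one_apply_eq_self, ContinuousMap.coe_one, Pi.one_apply,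
    one_mul]

lemma inner_mulContCLM_right (φ : C(T2π, ℂ)) (f g : Ltwo) :
    ⟪f, mulContCLM φ g⟫_ℂ = ⟪mulContCLM (star φ) f, g⟫_ℂ := by
  rw [inner_Ltwo, inner_Ltwo]
  refine integral_congr_ae ?_
  filter_upwards [mulCLM_coeFn (memLinfty_contMap φ) g,
    mulCLM_coeFn (memLinfty_contMap (star φ)) f] with θ hg hf
  rw [mulContCLM_apply, mulContCLM_apply, hg, hf, ContinuousMap.star_apply, map_mul,
    star_def, conj_conj]
  ring

end Multiplication

section Fourier

variable {T : ℝ}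

lemma fourier_add_eq_mul (m n : ℤ) :
    (fourier (m + n) : C(AddCircle T, ℂ)) = fourier m * fourier n :=
  ContinuousMap.ext fun _ => fourier_add

lemma fourier_zero_eq_one : (fourier 0 : C(AddCircle T, ℂ)) = 1 :=
  ContinuousMap.ext fun _ => fourier_zero

lemma star_fourier (n : ℤ) : star (fourier n : C(AddCircle T, ℂ)) = fourier (-n) :=
  ContinuousMap.ext fun _ => fourier_neg.symm

end Fourier

section HardySpace

lemma fourierCoeff_eq_inner (f : Ltwo) (n : ℤ) :
    fourierCoeff f n = ⟪(fourierLp 2 n : Ltwo), f⟫_ℂ := by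
  rw [← fourierBasis_repr, fourierBasis.repr_apply_apply, coe_fourierBasis]

lemma fourierCoeff_fourierLp (m n : ℤ) :
    fourierCoeff (fourierLp 2 m : Ltwo) n = if n = m then 1 else 0 := by
  rw [fourierCoeff_eq_inner, ← coe_fourierBasis]
  exact orthonormal_iff_ite.mp fourierBasis.orthonormal n m

lemma fourierCoeff_mulContCLM_fourier (m : ℤ) (f : Ltwo) (n : ℤ) :
    fourierCoeff (mulContCLM (fourier m) f) n = fourierCoeff f (n - m) := by
  rw [mulContCLM_apply, fourierCoeff_congr_ae (mulCLM_coeFn _ f)]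
  simp only [fourierCoeff, smul_eq_mul, ← mul_assoc, ← fourier_add, neg_sub, neg_add_eq_sub]

lemma mulContCLM_fourier_fourierLp (m n : ℤ) :
    mulContCLM (fourier m) (fourierLp 2 n) = (fourierLp 2 (m + n) : Ltwo) := by
  refine Lp.ext ?_
  filter_upwards [mulCLM_coeFn (memLinfty_contMap (fourier m)) (fourierLp 2 n),
    coeFn_fourierLp 2 n, coeFn_fourierLp 2 (m + n)] with θ h₁ h₂ h₃
  rw [mulContCLM_apply, h₁, h₂, h₃, fourier_add]

lemma mulContCLM_fourier_one_comp_fourier_neg_one :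
    mulContCLM (fourier 1) ∘L mulContCLM (fourier (-1)) = (1 : Ltwo →L[ℂ] Ltwo) := by
  rw [← mulContCLM_mul, ← fourier_add_eq_mul, add_neg_cancel, fourier_zero_eq_one, mulContCLM_one]

lemma mem_H2_iff {f : Ltwo} : f ∈ H2 ↔ ∀ n : ℤ, n < 0 → fourierCoeff f n = 0 := by
  unfold H2
  exact Iff.rfl

lemma fourierLp_mem_H2 {n : ℤ} (hn : 0 ≤ n) : (fourierLp 2 n : Ltwo) ∈ H2 :=
  mem_H2_iff.2 fun m hm => by rw [fourierCoeff_fourierLp, if_neg (by omega)]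

lemma fourierLp_mem_orthogonal_H2 {n : ℤ} (hn : n < 0) : (fourierLp 2 n : Ltwo) ∈ H2ᗮ :=
  fun f hf => by rw [inner_eq_zero_symm, ← fourierCoeff_eq_inner, mem_H2_iff.1 hf n hn]

lemma mulContCLM_fourier_mem_H2 {k : ℤ} (hk : 0 ≤ k) {h : Ltwo} (hh : h ∈ H2) :
    mulContCLM (fourier k) h ∈ H2 :=
  mem_H2_iff.2 fun n hn => by
    rw [fourierCoeff_mulContCLM_fourier, mem_H2_iff.1 hh _ (by omega)]

def backwardShift (h : Ltwo) : Ltwo :=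
  mulContCLM (fourier (-1)) (h - fourierCoeff h 0 • fourierLp 2 0)

lemma backwardShift_mem_H2 {h : Ltwo} (hh : h ∈ H2) : backwardShift h ∈ H2 := by
  refine mem_H2_iff.2 fun n hn => ?_
  rw [backwardShift, fourierCoeff_mulContCLM_fourier, fourierCoeff_eq_inner, inner_sub_right,
    inner_smul_right, ← fourierCoeff_eq_inner, ← fourierCoeff_eq_inner, fourierCoeff_fourierLp]
  rcases eq_or_ne n (-1) with rfl | hn'
  · norm_num
  · rw [if_neg (by omega), mem_H2_iff.1 hh _ (by omega), mul_zero, sub_zero]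

lemma mulContCLM_fourier_one_backwardShift (h : Ltwo) :
    mulContCLM (fourier 1) (backwardShift h) = h - fourierCoeff h 0 • fourierLp 2 0 := by
  rw [backwardShift, ← comp_apply, mulContCLM_fourier_one_comp_fourier_neg_one, one_apply_eq_self]

lemma mulContCLM_fourier_neg_one_eq (h : Ltwo) :
    mulContCLM (fourier (-1)) h = backwardShift h + fourierCoeff h 0 • fourierLp 2 (-1) := by
  rw [backwardShift, map_sub, map_smul, mulContCLM_fourier_fourierLp, add_zero, sub_add_cancel]

end HardySpace

section ModelSpace

variable {u : T2π → ℂ} (hu : IsInner u)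

lemma mem_KuSub_iff {g : Ltwo} :
    g ∈ KuSub u hu ↔ g ∈ H2 ∧ ∀ h ∈ H2, ⟪mulCLM u hu.memLinfty h, g⟫_ℂ = 0 := by
  unfold KuSub
  simp only [Submodule.mem_inf, Submodule.mem_orthogonal, Submodule.mem_map, coe_coe,
    forall_exists_index, and_imp, forall_apply_eq_imp_iff₂]

lemma KuSub_le_H2 : KuSub u hu ≤ H2 := fun _ hg => ((mem_KuSub_iff hu).1 hg).1

lemma mulCLM_fourierLp_zero_mem_H2 : mulCLM u hu.memLinfty (fourierLp 2 0) ∈ H2 := by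
  have hu_ae : ⇑(mulCLM u hu.memLinfty (fourierLp 2 0)) =ᵐ[μ] u := by
    filter_upwards [mulCLM_coeFn hu.memLinfty (fourierLp 2 0), coeFn_fourierLp 2 0] with θ h₁ h₂
    rw [h₁, h₂, fourier_zero, mul_one]
  exact mem_H2_iff.2 fun n hn => by rw [fourierCoeff_congr_ae hu_ae, hu.negCoeff n hn]

/-- `u eₙ = zⁿ u` has no negative coefficients for `n ≥ 0`, and `H²` is closed. -/
lemma mulCLM_mem_H2 {h : Ltwo} (hh : h ∈ H2) : mulCLM u hu.memLinfty h ∈ H2 := by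
  have hsum := (mulCLM u hu.memLinfty).hasSum (hasSum_fourier_series_L2 h)
  refine isClosed_H2.mem_of_tendsto hsum (Eventually.of_forall fun s => H2.sum_mem fun n _ => ?_)
  rw [map_smul]
  rcases lt_or_ge n 0 with hn | hn
  · rw [mem_H2_iff.1 hh n hn, zero_smul]
    exact H2.zero_mem
  · refine H2.smul_mem _ ?_
    have h₀ : (fourierLp 2 n : Ltwo) = mulContCLM (fourier n) (fourierLp 2 0) := by
      rw [mulContCLM_fourier_fourierLp, add_zero]
    rw [h₀, ← comp_apply, mulContCLM_apply, mulCLM_comp_comm, comp_apply, ← mulContCLM_apply]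
    exact mulContCLM_fourier_mem_H2 hn (mulCLM_fourierLp_zero_mem_H2 hu)

lemma mulCLM_mem_orthogonal_KuSub {h : Ltwo} (hh : h ∈ H2) :
    mulCLM u hu.memLinfty h ∈ (KuSub u hu)ᗮ :=
  fun _ hg => by rw [inner_eq_zero_symm]; exact ((mem_KuSub_iff hu).1 hg).2 h hh

lemma fourierLp_mem_orthogonal_KuSub {n : ℤ} (hn : n < 0) :
    (fourierLp 2 n : Ltwo) ∈ (KuSub u hu)ᗮ :=
  Submodule.orthogonal_le (KuSub_le_H2 hu) (fourierLp_mem_orthogonal_H2 hn)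

lemma mulContCLM_fourier_one_comp_mulCLM :
    mulContCLM (fourier 1) ∘L mulCLM u hu.memLinfty
      = mulCLM u hu.memLinfty ∘L mulContCLM (fourier 1) :=
  mulCLM_comp_comm _ _

lemma backwardShift_mem_KuSub {g : Ltwo} (hg : g ∈ KuSub u hu) : backwardShift g ∈ KuSub u hu := by
  obtain ⟨hgH2, hgu⟩ := (mem_KuSub_iff hu).1 hg
  refine (mem_KuSub_iff hu).2 ⟨backwardShift_mem_H2 hgH2, fun h hh => ?_⟩
  have hcoeff :
      ⟪mulContCLM (fourier 1) (mulCLM u hu.memLinfty h), (fourierLp 2 0 : Ltwo)⟫_ℂ = 0 := by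
    rw [inner_eq_zero_symm, ← fourierCoeff_eq_inner, fourierCoeff_mulContCLM_fourier,
      mem_H2_iff.1 (mulCLM_mem_H2 hu hh) _ (by norm_num)]
  rw [backwardShift, inner_mulContCLM_right, star_fourier, neg_neg, inner_sub_right,
    inner_smul_right, hcoeff, mul_zero, sub_zero, ← comp_apply,
    mulContCLM_fourier_one_comp_mulCLM hu, comp_apply]
  exact hgu _ (mulContCLM_fourier_mem_H2 zero_le_one hh)

lemma complCompression_fourier_neg_one_apply (g : KuSub u hu) :
    complCompression (KuSub u hu) (mulContCLM (fourier (-1))) g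
      = fourierCoeff (g : Ltwo) 0 • (fourierLp 2 (-1) : Ltwo) := by
  rw [complCompression_apply_apply]
  refine starProjection_orthogonal_eq_of_sub_mem _
    (Submodule.smul_mem _ _ (fourierLp_mem_orthogonal_KuSub hu (by norm_num))) ?_
  rw [mulContCLM_fourier_neg_one_eq, add_sub_cancel_right]
  exact backwardShift_mem_KuSub hu g.2

/-- Split `h = h(0) + z S^*h`: the second part contributes `⟪u S^*h, g⟫ = 0`. -/
lemma inner_mulCLM_mulContCLM_fourier_one {h g : Ltwo} (hh : h ∈ H2) (hg : g ∈ KuSub u hu) :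
    ⟪mulCLM u hu.memLinfty h, mulContCLM (fourier 1) g⟫_ℂ
      = conj (fourierCoeff h 0)
        * ⟪mulCLM u hu.memLinfty (fourierLp 2 0), mulContCLM (fourier 1) g⟫_ℂ := by
  have hdecomp :
      h = fourierCoeff h 0 • fourierLp 2 0 + mulContCLM (fourier 1) (backwardShift h) := by
    rw [mulContCLM_fourier_one_backwardShift, add_sub_cancel]
  have hshift :
      ⟪mulCLM u hu.memLinfty (mulContCLM (fourier 1) (backwardShift h)),
        mulContCLM (fourier 1) g⟫_ℂ = 0 := by
    rw [← comp_apply (mulCLM u _), ← mulContCLM_fourier_one_comp_mulCLM hu, comp_apply,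
      mulContCLM_apply, inner_mulCLM_mulCLM_of_norm_eq_one (memLinfty_contMap (fourier 1))
        (ae_of_all _ fun _ => Circle.norm_coe _)]
    exact ((mem_KuSub_iff hu).1 hg).2 _ (backwardShift_mem_H2 hh)
  conv_lhs => rw [hdecomp]
  rw [map_add, map_smul, inner_add_left, inner_smul_left, hshift, add_zero]

lemma complCompression_fourier_one_apply (g : KuSub u hu) :
    complCompression (KuSub u hu) (mulContCLM (fourier 1)) g
      = ⟪mulCLM u hu.memLinfty (fourierLp 2 0), mulContCLM (fourier 1) g⟫_ℂ
        • mulCLM u hu.memLinfty (fourierLp 2 0) := by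
  rw [complCompression_apply_apply]
  refine starProjection_orthogonal_eq_of_sub_mem _
    (Submodule.smul_mem _ _ (mulCLM_mem_orthogonal_KuSub hu (fourierLp_mem_H2 le_rfl))) ?_
  obtain ⟨hgH2, -⟩ := (mem_KuSub_iff hu).1 g.2
  refine (mem_KuSub_iff hu).2 ⟨H2.sub_mem (mulContCLM_fourier_mem_H2 zero_le_one hgH2)
    (H2.smul_mem _ (mulCLM_fourierLp_zero_mem_H2 hu)), fun h hh => ?_⟩
  rw [inner_sub_right, inner_smul_right,
    inner_mulCLM_mulCLM_of_norm_eq_one hu.memLinfty hu.unimodular, ← inner_conj_symm h,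
    ← fourierCoeff_eq_inner, inner_mulCLM_mulContCLM_fourier_one hu hh g.2, mul_comm, sub_self]

lemma isCompactOperator_complCompression_fourier_neg_one :
    IsCompactOperator (complCompression (KuSub u hu) (mulContCLM (fourier (-1)))) := by
  have h : complCompression (KuSub u hu) (mulContCLM (fourier (-1)))
      = (innerSL ℂ (fourierLp 2 0 : Ltwo) ∘L (KuSub u hu).subtypeL).smulRight
          (fourierLp 2 (-1) : Ltwo) := by
    ext1 g
    rw [complCompression_fourier_neg_one_apply, smulRight_apply, comp_apply, innerSL_apply_apply,
      Submodule.subtypeL_apply, fourierCoeff_eq_inner]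
  rw [h]
  exact isCompactOperator_smulRight _ _

lemma isCompactOperator_complCompression_fourier_one :
    IsCompactOperator (complCompression (KuSub u hu) (mulContCLM (fourier 1))) := by
  have h : complCompression (KuSub u hu) (mulContCLM (fourier 1))
      = (innerSL ℂ (mulCLM u hu.memLinfty (fourierLp 2 0)) ∘L mulContCLM (fourier 1) ∘L
          (KuSub u hu).subtypeL).smulRight (mulCLM u hu.memLinfty (fourierLp 2 0)) := by
    ext1 g
    rw [complCompression_fourier_one_apply, smulRight_apply, comp_apply, comp_apply,
      innerSL_apply_apply, Submodule.subtypeL_apply]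
  rw [h]
  exact isCompactOperator_smulRight _ _

lemma isCompactOperator_complCompression_fourier (n : ℤ) :
    IsCompactOperator (complCompression (KuSub u hu) (mulContCLM (fourier n))) := by
  induction n using Int.induction_on with
  | zero =>
    rw [fourier_zero_eq_one, mulContCLM_one, complCompression_one]
    exact isCompactOperator_zero
  | succ n ih =>
    rw [fourier_add_eq_mul, mulContCLM_mul]
    exact isCompactOperator_complCompression_comp ih
      (isCompactOperator_complCompression_fourier_one hu)
  | pred n ih =>
    rw [sub_eq_add_neg, fourier_add_eq_mul, mulContCLM_mul]
    exact isCompactOperator_complCompression_comp ih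
      (isCompactOperator_complCompression_fourier_neg_one hu)

lemma isCompactOperator_complCompression_mulContCLM (f : C(T2π, ℂ)) :
    IsCompactOperator (complCompression (KuSub u hu) (mulContCLM f)) :=
  isCompactOperator_of_forall_fourier (complCompression (KuSub u hu) ∘L mulContCLM)
    (isCompactOperator_complCompression_fourier hu) f

lemma isCompactOperator_TTOp_mul_TTOp_sub (φ ψ : C(T2π, ℂ)) :
    IsCompactOperator ⇑(TTOp u hu φ (memLinfty_contMap φ) * TTOp u hu ψ (memLinfty_contMap ψ)
      - TTOp u hu ⇑(φ * ψ) (memLinfty_contMap (φ * ψ))) := by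
  change IsCompactOperator ⇑(compression (KuSub u hu) (mulContCLM φ)
    * compression (KuSub u hu) (mulContCLM ψ) - compression (KuSub u hu) (mulContCLM (φ * ψ)))
  rw [mulContCLM_mul, compression_mul_compression_sub_compression_comp]
  exact ((isCompactOperator_complCompression_mulContCLM hu ψ).clm_comp
    ((KuSub u hu).orthogonalProjectionOnto ∘L mulContCLM φ)).neg

end ModelSpace

/-- For continuous symbols `φ, ψ`, the semicommutator
`A_φ^u A_ψ^u - A_{φψ}^u` is compact; in particular the commutator `[A_φ^u, A_ψ^u]` is
compact. -/
theorem semicommutator_compact_of_continuous (u : T2π → ℂ) (hu : IsInner u)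
    (φ ψ : C(T2π, ℂ)) :
    IsCompactOperator ⇑(TTOp u hu ⇑φ (memLinfty_contMap φ) * TTOp u hu ⇑ψ (memLinfty_contMap ψ)
      - TTOp u hu (fun θ => φ θ * ψ θ)
          (memLinfty_mul (memLinfty_contMap φ) (memLinfty_contMap ψ))) ∧
    IsCompactOperator ⇑(TTOp u hu ⇑φ (memLinfty_contMap φ) * TTOp u hu ⇑ψ (memLinfty_contMap ψ)
      - TTOp u hu ⇑ψ (memLinfty_contMap ψ) * TTOp u hu ⇑φ (memLinfty_contMap φ)) := by
  have hφψ := isCompactOperator_TTOp_mul_TTOp_sub hu φ ψ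
  have hψφ := isCompactOperator_TTOp_mul_TTOp_sub hu ψ φ
  rw [mul_comm ψ φ] at hψφ
  exact ⟨hφψ, isCompactOperator_mul_sub_mul_of_sub hφψ hψφ⟩

end TTOPaper
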